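/- Product bound: suppose there exist m₀ ≥ 2, δ > 0, λ > δ such that f(j) ≤ (λ-δ)j for all j ≥ m₀. Let μ = λ/(λ-δ). Then for all integers i ≥ m ≥ m₀ and k ≥ 1, ∏_{j=m}^{i-1} f(j)/(kλ + f(j)) ≤ ((kμ+m)/(kμ+i))^{kμ}. -/

import Mathlib

/-!
Since `x ↦ x / (kλ + x)` is increasing, `f j ≤ (λ - δ) j` bounds each factor by
`(λ - δ) j / (kλ + (λ - δ) j) = j / (a + j)` with `a = kμ`. Each factor `1 - a / (a + j)` is at most `exp (-a / (a + j))`, and since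
`log (1 + 1/y) ≤ 1/y` this is at most `((a + j) / (a + j + 1)) ^ a`; the latter telescopes
to `((a + m) / (a + i)) ^ a`.
-/

open Finset Real

lemma one_sub_div_le_rpow_div_add_one {a y : ℝ} (ha : 0 ≤ a) (hy : 0 < y) :
    1 - a / y ≤ (y / (y + 1)) ^ a := by
  have hlog : -(1 / y) ≤ log (y / (y + 1)) := by
    have := log_le_sub_one_of_pos (x := (y + 1) / y) (by positivity)
    rw [← inv_div (y + 1) y, log_inv]
    have h : (y + 1) / y - 1 = 1 / y := by rw [add_div, div_self hy.ne']; ring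
    linarith
  calc 1 - a / y = -(a * (1 / y)) + 1 := by ring
    _ ≤ exp (-(a * (1 / y))) := add_one_le_exp _
    _ ≤ exp (log (y / (y + 1)) * a) := by
        gcongr
        nlinarith [mul_le_mul_of_nonneg_left hlog ha]
    _ = (y / (y + 1)) ^ a := (rpow_def_of_pos (by positivity) a).symm

lemma prod_Ico_div_add_le_rpow {a : ℝ} (ha : 0 < a) {m i : ℕ} (hmi : m ≤ i) :
    ∏ j ∈ Ico m i, (j : ℝ) / (a + j) ≤ ((a + m) / (a + i)) ^ a := by
  induction i, hmi using Nat.le_induction with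
  | base => simp [div_self (by positivity : a + m ≠ 0)]
  | succ i hmi ih =>
    have hfactor : (i : ℝ) / (a + i) ≤ ((a + i) / (a + i + 1)) ^ a := by
      have := one_sub_div_le_rpow_div_add_one ha.le (by positivity : 0 < a + i)
      rwa [one_sub_div (by positivity), add_sub_cancel_left] at this
    rw [prod_Ico_succ_top hmi]
    calc (∏ j ∈ Ico m i, (j : ℝ) / (a + j)) * ((i : ℝ) / (a + i))
        ≤ ((a + m) / (a + i)) ^ a * ((a + i) / (a + i + 1)) ^ a :=
          mul_le_mul ih hfactor (by positivity) (by positivity)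
      _ = ((a + m) / (a + i) * ((a + i) / (a + i + 1))) ^ a :=
          (mul_rpow (by positivity) (by positivity)).symm
      _ = ((a + m) / (a + ↑(i + 1))) ^ a := by
          rw [div_mul_div_cancel₀ (by positivity), Nat.cast_succ, add_assoc]

lemma div_add_le_div_add {c x y : ℝ} (hc : 0 < c) (hx : 0 ≤ x) (hxy : x ≤ y) :
    x / (c + x) ≤ y / (c + y) := by
  rw [div_le_div_iff₀ (by positivity) (by linarith)]
  nlinarith

/-- Product bound: if `f(j) ≤ (λ-δ)j` for all `j ≥ m₀` (with `m₀ ≥ 2`, `λ > δ > 0`),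
then, with `μ = λ/(λ-δ)`, for all integers `i ≥ m ≥ m₀` and `k ≥ 1`,
`∏_{j=m}^{i-1} f(j)/(kλ + f(j)) ≤ ((kμ+m)/(kμ+i))^{kμ}`. -/
theorem product_bound (f : ℕ → ℝ) (hfpos : ∀ j : ℕ, 1 ≤ j → 0 < f j)
    (m₀ : ℕ) (hm₀ : 2 ≤ m₀) (lam δ : ℝ) (hδ : 0 < δ) (hlam : δ < lam)
    (hf : ∀ j : ℕ, m₀ ≤ j → f j ≤ (lam - δ) * j)
    (μ : ℝ) (hμ : μ = lam / (lam - δ)) :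
    ∀ k m i : ℕ, 1 ≤ k → m₀ ≤ m → m ≤ i →
      ∏ j ∈ Finset.Ico m i, f j / ((k : ℝ) * lam + f j)
        ≤ (((k : ℝ) * μ + m) / ((k : ℝ) * μ + i)) ^ ((k : ℝ) * μ) := by
  intro k m i hk hm hmi
  have hgap : 0 < lam - δ := by linarith
  have hklam : 0 < (k : ℝ) * lam := mul_pos (by exact_mod_cast hk) (by linarith)
  have hkμ : 0 < (k : ℝ) * μ := by
    rw [hμ, ← mul_div_assoc]
    positivity
  refine le_trans (prod_le_prod (fun j hj => ?_) (fun j hj => ?_)) (prod_Ico_div_add_le_rpow hkμ hmi)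
  all_goals
    have hj : m₀ ≤ j := hm.trans (mem_Ico.mp hj).1
    have hfj := hfpos j (by omega)
  · positivity
  · have hrescale : (lam - δ) * j / (k * lam + (lam - δ) * j) = (j : ℝ) / (k * μ + j) := by
      rw [hμ]
      field_simp
    rw [← hrescale]
    exact div_add_le_div_add (by positivity) hfj.le (hf j hj)
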